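/- Let D ≥ 1, let ω = e^{2πi/D}, and for g ∈ Z/DZ define the diagonal unitary U_g = diag(ω^{jg})_{j=0}^{D−1}. Let c : Z/DZ → C and define Γ[X] = (1/D) Σ_g c_g U_g Tr(U_g† X). If the Choi matrix C[Γ] = Σ_{α,β} E_{αβ} ⊗ Γ[E_{αβ}] is positive semidefinite, then for every α ∈ Z/DZ the discrete Fourier sum Σ_g c_g ω^{gα} is a nonnegative real number. -/

import Mathlib

open Matrix
open scoped Kronecker ComplexOrder

/-!
The diagonal entry of the Choi matrix at `((0, α), (0, α))` is `Γ[E₀₀]_{αα}`. Since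
`Tr(U_gᴴ E₀₀) = 1` for every clock unitary, this entry is `(1/D) Σ_g c_g ω^{gα}`, and diagonal
entries of a positive semidefinite matrix are nonnegative.
-/

namespace Matrix

variable {n R : Type*} [Fintype n] [DecidableEq n]

theorem sum_single_kronecker_apply [Semiring R] (Γ : Matrix n n R → Matrix n n R)
    (a b i j : n) :
    (∑ a', ∑ b', single a' b' (1 : R) ⊗ₖ Γ (single a' b' 1)) (a, i) (b, j) =
      Γ (single a b 1) i j := by
  simp only [sum_apply, kroneckerMap_apply, single_apply, ite_mul, one_mul, zero_mul]
  simp [ite_and]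

theorem PosSemidef.choi_diag_nonneg [Ring R] [PartialOrder R] [StarRing R]
    {Γ : Matrix n n R → Matrix n n R}
    (hΓ : (∑ a, ∑ b, single a b (1 : R) ⊗ₖ Γ (single a b 1)).PosSemidef) (a i : n) :
    0 ≤ Γ (single a a 1) i i := by
  simpa only [sum_single_kronecker_apply] using hΓ.diag_nonneg (i := (a, i))

theorem sum_smul_trace_conjTranspose_mul_single_apply {G : Type*} [Fintype G] [Semiring R]
    [StarRing R] (s : R) (c : G → R) (U : G → Matrix n n R) (a i j : n) :
    (s • ∑ g, (c g * ((U g)ᴴ * single a a 1).trace) • U g) i j =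
      s * ∑ g, c g * star (U g a a) * U g i j := by
  simp [trace_mul_single, sum_apply, mul_assoc]

end Matrix

theorem choi_positivity_fourier_constraint_general (D : ℕ) [NeZero D]
    (c : ZMod D → ℂ)
    (ω : ℂ)
    (U : ZMod D → Matrix (Fin D) (Fin D) ℂ)
    (hU : ∀ g, U g = Matrix.diagonal fun j : Fin D => ω ^ ((j : ℕ) * (g.val)))
    (Γ : Matrix (Fin D) (Fin D) ℂ →ₗ[ℂ] Matrix (Fin D) (Fin D) ℂ)
    (hΓ : ∀ X, Γ X = (D : ℂ)⁻¹ • ∑ g, (c g * ((U g)ᴴ * X).trace) • U g)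
    (hChoi : (∑ α : Fin D, ∑ β : Fin D,
        (Matrix.single α β (1 : ℂ)) ⊗ₖ Γ (Matrix.single α β 1)).PosSemidef) :
    ∀ α : ZMod D,
      (∑ g, c g * ω ^ (g.val * α.val)).im = 0 ∧
        0 ≤ (∑ g, c g * ω ^ (g.val * α.val)).re := by
  intro α
  have hentry := hChoi.choi_diag_nonneg 0 ⟨α.val, α.val_lt⟩
  rw [hΓ, sum_smul_trace_conjTranspose_mul_single_apply] at hentry
  have hfourier : 0 ≤ (D : ℂ)⁻¹ * ∑ g, c g * ω ^ (g.val * α.val) := by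
    simpa [hU, mul_comm α.val] using hentry
  have hsum : 0 ≤ ∑ g, c g * ω ^ (g.val * α.val) := by
    simpa [NeZero.ne D] using mul_nonneg (Nat.cast_nonneg' D : (0 : ℂ) ≤ D) hfourier
  obtain ⟨hre, him⟩ := Complex.nonneg_iff.1 hsum
  exact ⟨him.symm, hre⟩

/-- Choi positivity constrains the spectrum of a channel with clock-unitary
    eigenvectors: if Γ[X] = (1/D) Σ_g c_g U_g Tr(U_gᴴ X) with
    U_g = diag(ω^{jg}), ω = e^{2πi/D}, and the Choi matrix
    Σ_{α,β} E_{αβ} ⊗ Γ[E_{αβ}] is positive semidefinite, then every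
    discrete Fourier sum Σ_g c_g ω^{gα} is real and nonnegative. -/
theorem choi_positivity_fourier_constraint (D : ℕ) [NeZero D] (hD : 1 ≤ D)
    (c : ZMod D → ℂ)
    (ω : ℂ) (hω : ω = Complex.exp (2 * Real.pi * Complex.I / D))
    (U : ZMod D → Matrix (Fin D) (Fin D) ℂ)
    (hU : ∀ g, U g = Matrix.diagonal fun j : Fin D => ω ^ ((j : ℕ) * (g.val)))
    (Γ : Matrix (Fin D) (Fin D) ℂ →ₗ[ℂ] Matrix (Fin D) (Fin D) ℂ)
    (hΓ : ∀ X, Γ X = (D : ℂ)⁻¹ • ∑ g, (c g * ((U g)ᴴ * X).trace) • U g)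
    (hChoi : (∑ α : Fin D, ∑ β : Fin D,
        (Matrix.single α β (1 : ℂ)) ⊗ₖ Γ (Matrix.single α β 1)).PosSemidef) :
    ∀ α : ZMod D,
      (∑ g, c g * ω ^ (g.val * α.val)).im = 0 ∧
        0 ≤ (∑ g, c g * ω ^ (g.val * α.val)).re :=
  choi_positivity_fourier_constraint_general D c ω U hU Γ hΓ hChoi
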